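/- Suppose the empirical gradient uniformly approximates the population gradient on a set 𝒳: for all differentiable x ∈ 𝒳, ‖∇F̂(x) − ∇F(x)‖ ≤ ε. Then for every x ∈ 𝒳 and every α > 0, the minimum-norm element of the population Goldstein α-subdifferential satisfies ‖∂̄_α F(x)‖ ≤ ‖∂̄_α F̂(x)‖ + ε, provided B(x,α) ⊆ 𝒳. -/
import Mathlib


open MeasureTheory Pointwise

/-- The Goldstein `α`-subdifferential of a differentiable function, built from gradients:
`conv({∇h(y) : y ∈ B(x,α)})`. -/
noncomputable def goldsteinGradSubdiff {d : ℕ} (h : EuclideanSpace ℝ (Fin d) → ℝ) (α : ℝ)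
    (x : EuclideanSpace ℝ (Fin d)) : Set (EuclideanSpace ℝ (Fin d)) :=
  convexHull ℝ ((fun y => gradient h y) '' Metric.closedBall x α)

/-- If the empirical gradient uniformly approximates the population gradient on `𝒳` up to `ε`,
then the minimum norm over the population Goldstein `α`-subdifferential is at most the minimum
norm over the empirical one plus `ε`, at any point whose `α`-ball is contained in `𝒳`. -/
theorem goldstein_min_norm_transfer (d : ℕ) (L α ε : ℝ) (hα : 0 < α) (hε : 0 < ε)
    (𝒳 : Set (EuclideanSpace ℝ (Fin d)))
    (F Fhat : EuclideanSpace ℝ (Fin d) → ℝ)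
    (hLipF : ∀ x y : EuclideanSpace ℝ (Fin d), |F x - F y| ≤ L * ‖x - y‖)
    (hLipFhat : ∀ x y : EuclideanSpace ℝ (Fin d), |Fhat x - Fhat y| ≤ L * ‖x - y‖)
    (hdiffF : ∀ y ∈ 𝒳, DifferentiableAt ℝ F y)
    (hdiffFhat : ∀ y ∈ 𝒳, DifferentiableAt ℝ Fhat y)
    (huc : ∀ y ∈ 𝒳, ‖gradient Fhat y - gradient F y‖ ≤ ε)
    (x : EuclideanSpace ℝ (Fin d)) (hx : x ∈ 𝒳)
    (hball : Metric.closedBall x α ⊆ 𝒳)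
    (gF gFhat : EuclideanSpace ℝ (Fin d))
    (hgF : gF ∈ goldsteinGradSubdiff F α x)
    (hgFmin : ∀ g ∈ goldsteinGradSubdiff F α x, ‖gF‖ ≤ ‖g‖)
    (hgFhat : gFhat ∈ goldsteinGradSubdiff Fhat α x)
    (hgFhatmin : ∀ g ∈ goldsteinGradSubdiff Fhat α x, ‖gFhat‖ ≤ ‖g‖) :
    ‖gF‖ ≤ ‖gFhat‖ + ε := by
  -- empirical gradient image ⊆ population gradient image + closed ball of radius ε
  have hsub : (fun y => gradient Fhat y) '' Metric.closedBall x α ⊆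
      ((fun y => gradient F y) '' Metric.closedBall x α) + Metric.closedBall (0 : EuclideanSpace ℝ (Fin d)) ε := by
    rintro v ⟨y, hy, rfl⟩
    refine ⟨gradient F y, ⟨y, hy, rfl⟩, gradient Fhat y - gradient F y, ?_, by module⟩
    simpa [Metric.mem_closedBall, dist_eq_norm] using huc y (hball hy)
  have hhull : goldsteinGradSubdiff Fhat α x ⊆
      goldsteinGradSubdiff F α x + Metric.closedBall (0 : EuclideanSpace ℝ (Fin d)) ε := by
    calc goldsteinGradSubdiff Fhat α x
        ⊆ convexHull ℝ (((fun y => gradient F y) '' Metric.closedBall x α)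
            + Metric.closedBall (0 : EuclideanSpace ℝ (Fin d)) ε) := convexHull_mono hsub
      _ = goldsteinGradSubdiff F α x + convexHull ℝ (Metric.closedBall (0 : EuclideanSpace ℝ (Fin d)) ε) :=
          convexHull_add _ _
      _ = goldsteinGradSubdiff F α x + Metric.closedBall (0 : EuclideanSpace ℝ (Fin d)) ε := by
          rw [(convex_closedBall (0 : EuclideanSpace ℝ (Fin d)) ε).convexHull_eq]
  obtain ⟨g, hg, e, he, hge⟩ := hhull hgFhat
  have hne : ‖e‖ ≤ ε := by simpa [Metric.mem_closedBall, dist_eq_norm] using he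
  calc ‖gF‖ ≤ ‖g‖ := hgFmin g hg
    _ = ‖gFhat - e‖ := by rw [← hge]; ring_nf; rw [add_sub_cancel_right]
    _ ≤ ‖gFhat‖ + ‖e‖ := norm_sub_le _ _
    _ ≤ ‖gFhat‖ + ε := by linarith
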